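/- For one-dimensional Gaussians P = N(m₀, σ₀²) and Q = N(m₁, σ₁²) with σ₀, σ₁ > 0, the squared 2-Wasserstein distance satisfies W₂(P,Q)² = (m₀ − m₁)² + (σ₀ − σ₁)². -/

import Mathlib

/-!
Under any coupling `γ`, with `X, Y` the two coordinates, `E(X - Y)² = (EX - EY)² + Var(X - Y)`
and `Var(X - Y) = Var X - 2 Cov(X, Y) + Var Y ≥ (σ₀ - σ₁)²` by Cauchy–Schwarz for the covariance.
The bound is attained by the monotone coupling `Y = (σ₁ / σ₀) X + (m₁ - (σ₁ / σ₀) m₀)`, under which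
`X - Y` is Gaussian with mean `m₀ - m₁` and variance `(σ₀ - σ₁)²`.
-/

open MeasureTheory ProbabilityTheory
open scoped NNReal

section Moments

variable {Ω : Type*} {mΩ : MeasurableSpace Ω} {μ : Measure Ω} {X Y : Ω → ℝ}

lemma sq_covariance_le_variance_mul_variance [IsFiniteMeasure μ] (hX : MemLp X 2 μ)
    (hY : MemLp Y 2 μ) : cov[X, Y; μ] ^ 2 ≤ Var[X; μ] * Var[Y; μ] := by
  -- `t ↦ Var[t • X - Y]` is a nonnegative quadratic, so its discriminant is nonpositive.
  have hquad (t : ℝ) : 0 ≤ Var[X; μ] * (t * t) + (-2 * cov[X, Y; μ]) * t + Var[Y; μ] := by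
    have := variance_nonneg (t • X - Y) μ
    rw [variance_sub (hX.const_smul t) hY, variance_smul, covariance_smul_left] at this
    linarith
  have := discrim_le_zero hquad
  rw [discrim] at this
  linarith

lemma sq_sub_sqrt_variance_le_variance_sub [IsFiniteMeasure μ] (hX : MemLp X 2 μ)
    (hY : MemLp Y 2 μ) : (√Var[X; μ] - √Var[Y; μ]) ^ 2 ≤ Var[X - Y; μ] := by
  have hcov : cov[X, Y; μ] ≤ √Var[X; μ] * √Var[Y; μ] := by
    rw [← Real.sqrt_mul (variance_nonneg _ _)]
    exact Real.le_sqrt_of_sq_le (sq_covariance_le_variance_mul_variance hX hY)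
  rw [variance_sub hX hY, sub_sq, Real.sq_sqrt (variance_nonneg _ _),
    Real.sq_sqrt (variance_nonneg _ _)]
  linarith

lemma integral_sq_eq_sq_integral_add_variance [IsProbabilityMeasure μ] (hX : MemLp X 2 μ) :
    ∫ ω, X ω ^ 2 ∂μ = (∫ ω, X ω ∂μ) ^ 2 + Var[X; μ] := by
  rw [variance_eq_sub hX]
  simp only [Pi.pow_apply]
  ring

end Moments

lemma le_integral_sq_sub_of_coupling {μ ν : Measure ℝ} [IsProbabilityMeasure μ]
    {γ : Measure (ℝ × ℝ)} (hμ : MemLp id 2 μ) (hν : MemLp id 2 ν) (h₁ : γ.map Prod.fst = μ)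
    (h₂ : γ.map Prod.snd = ν) :
    (μ[id] - ν[id]) ^ 2 + (√Var[id; μ] - √Var[id; ν]) ^ 2 ≤ ∫ p, (p.1 - p.2) ^ 2 ∂γ := by
  have : IsProbabilityMeasure γ := by
    rw [← Measure.isProbabilityMeasure_map_iff measurable_fst.aemeasurable, h₁]
    infer_instance
  subst h₁ h₂
  have hX : MemLp Prod.fst 2 γ := (memLp_map_measure_iff hμ.1 measurable_fst.aemeasurable).1 hμ
  have hY : MemLp Prod.snd 2 γ := (memLp_map_measure_iff hν.1 measurable_snd.aemeasurable).1 hν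
  have hXY : MemLp (fun p : ℝ × ℝ ↦ p.1 - p.2) 2 γ := hX.sub hY
  rw [variance_id_map measurable_fst.aemeasurable, variance_id_map measurable_snd.aemeasurable,
    integral_map measurable_fst.aemeasurable aestronglyMeasurable_id,
    integral_map measurable_snd.aemeasurable aestronglyMeasurable_id,
    integral_sq_eq_sq_integral_add_variance hXY,
    integral_sub (hX.integrable one_le_two) (hY.integrable one_le_two)]
  exact add_le_add_right (sq_sub_sqrt_variance_le_variance_sub hX hY) _

lemma integral_sq_gaussianReal (m : ℝ) (v : ℝ≥0) : ∫ x, x ^ 2 ∂gaussianReal m v = m ^ 2 + v := by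
  rw [integral_sq_eq_sq_integral_add_variance (X := fun x ↦ x) (memLp_id_gaussianReal 2),
    integral_id_gaussianReal, variance_fun_id_gaussianReal]

lemma gaussianReal_map_const_mul_add (m : ℝ) (v : ℝ≥0) (a b : ℝ) :
    (gaussianReal m v).map (fun x ↦ a * x + b) =
      gaussianReal (a * m + b) (.mk (a ^ 2) (sq_nonneg a) * v) := by
  rw [← gaussianReal_map_add_const, ← gaussianReal_map_const_mul,
    Measure.map_map (measurable_add_const b) (measurable_const_mul a)]
  rfl

lemma integral_sq_const_mul_add_gaussianReal (m : ℝ) (v : ℝ≥0) (a b : ℝ) :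
    ∫ x, (a * x + b) ^ 2 ∂gaussianReal m v = (a * m + b) ^ 2 + a ^ 2 * v := by
  rw [← integral_map (f := fun y ↦ y ^ 2) (by fun_prop) (by fun_prop),
    gaussianReal_map_const_mul_add, integral_sq_gaussianReal]
  rfl

lemma exists_coupling_gaussianReal_integral_sq_sub_eq (m₀ m₁ : ℝ) {σ₀ : ℝ≥0} (σ₁ : ℝ≥0)
    (h₀ : σ₀ ≠ 0) :
    ∃ γ : Measure (ℝ × ℝ), γ.map Prod.fst = gaussianReal m₀ (σ₀ ^ 2) ∧
      γ.map Prod.snd = gaussianReal m₁ (σ₁ ^ 2) ∧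
      ∫ p, (p.1 - p.2) ^ 2 ∂γ = (m₀ - m₁) ^ 2 + ((σ₀ : ℝ) - σ₁) ^ 2 := by
  set c : ℝ := σ₁ / σ₀
  set d : ℝ := m₁ - c * m₀
  have hσ₀ : (σ₀ : ℝ) ≠ 0 := by exact_mod_cast h₀
  have hT : Measurable fun x : ℝ ↦ (x, c * x + d) := by fun_prop
  refine ⟨(gaussianReal m₀ (σ₀ ^ 2)).map fun x ↦ (x, c * x + d), ?_, ?_, ?_⟩
  · rw [Measure.map_map measurable_fst hT]
    exact Measure.map_id
  · rw [Measure.map_map measurable_snd hT, Function.comp_def, gaussianReal_map_const_mul_add]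
    congr 1
    · simp only [d]
      ring
    · ext
      simp only [c, NNReal.coe_mul, NNReal.coe_mk, NNReal.coe_pow]
      field_simp
  · have hcost (x : ℝ) : (x - (c * x + d)) ^ 2 = ((1 - c) * x + -d) ^ 2 := by ring
    rw [integral_map hT.aemeasurable (by fun_prop)]
    simp only [hcost, integral_sq_const_mul_add_gaussianReal, d, c]
    push_cast
    field_simp
    ring

theorem wasserstein2_sq_gaussianReal_general (m₀ m₁ : ℝ) (σ₀ σ₁ : NNReal)
    (h₀ : 0 < σ₀) :
    sInf {r : ℝ | ∃ γ : Measure (ℝ × ℝ),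
        γ.map Prod.fst = gaussianReal m₀ (σ₀ ^ 2) ∧
        γ.map Prod.snd = gaussianReal m₁ (σ₁ ^ 2) ∧
        r = ∫ p, (p.1 - p.2) ^ 2 ∂γ} =
      (m₀ - m₁) ^ 2 + ((σ₀ : ℝ) - (σ₁ : ℝ)) ^ 2 := by
  refine IsLeast.csInf_eq ⟨?_, ?_⟩
  · obtain ⟨γ, h₁, h₂, hγ⟩ := exists_coupling_gaussianReal_integral_sq_sub_eq m₀ m₁ σ₁ h₀.ne'
    exact ⟨γ, h₁, h₂, hγ.symm⟩
  · rintro r ⟨γ, h₁, h₂, rfl⟩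
    simpa only [id_eq, integral_id_gaussianReal, variance_id_gaussianReal, NNReal.coe_pow,
      NNReal.zero_le_coe, Real.sqrt_sq] using
      le_integral_sq_sub_of_coupling (memLp_id_gaussianReal 2) (memLp_id_gaussianReal 2) h₁ h₂

/-- The squared 2-Wasserstein distance between univariate Gaussians
`N(m₀, σ₀²)` and `N(m₁, σ₁²)` (defined as the infimum over couplings of the
expected squared distance) equals `(m₀ − m₁)² + (σ₀ − σ₁)²`. -/
theorem wasserstein2_sq_gaussianReal (m₀ m₁ : ℝ) (σ₀ σ₁ : NNReal)
    (h₀ : 0 < σ₀) (h₁ : 0 < σ₁) :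
    sInf {r : ℝ | ∃ γ : Measure (ℝ × ℝ),
        γ.map Prod.fst = gaussianReal m₀ (σ₀ ^ 2) ∧
        γ.map Prod.snd = gaussianReal m₁ (σ₁ ^ 2) ∧
        r = ∫ p, (p.1 - p.2) ^ 2 ∂γ} =
      (m₀ - m₁) ^ 2 + ((σ₀ : ℝ) - (σ₁ : ℝ)) ^ 2 :=
  wasserstein2_sq_gaussianReal_general m₀ m₁ σ₀ σ₁ h₀
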